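/- arXiv:1603.06511 — 2 statements merged into one kernel-verified Lean document; each statement's English description precedes it below -/
import Mathlib

section
/- Let n ≥ 2 be an integer, n−1 ≤ α < n, σ ∈ ℝ, 1 ≤ p < ∞, φ ∈ L_p(a,b), and u = I_{a+}^α φ. Then the function v(x) = e^{σx} u(x) is (n−2)-times continuously differentiable on (a,b], each derivative D^j v (0 ≤ j ≤ n−2) extends continuously to [a,b], and D^j v(x) → 0 as x → a⁺ for every j = 0, 1, …, n−2. (The classical-derivative part of the paper's Corollary 2.2.3.) -/
open MeasureTheory Set Filter Topology

namespace Stmt5Aux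

/-- Set-integral version of the Riemann-Liouville kernel integral. -/
noncomputable def J (a : ℝ) (ψ : ℝ → ℝ) (β x : ℝ) : ℝ := ∫ s in Ioo a x, (x - s) ^ β * ψ s

variable {a b : ℝ} {ψ : ℝ → ℝ}

lemma kernel_meas (hm : StronglyMeasurable ψ) {β x : ℝ} (hβ : 0 ≤ β) :
    StronglyMeasurable (fun s => (x - s) ^ β * ψ s) :=
  (((Real.continuous_rpow_const hβ).comp (continuous_const.sub continuous_id)).stronglyMeasurable).mul hm

lemma J_eq (hm : StronglyMeasurable ψ) {β x : ℝ} (hβ : 0 ≤ β) (hx : x ≤ b) :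
    J a ψ β x = ∫ s, (Ioo a x).indicator (fun s => (x - s) ^ β * ψ s) s
      ∂(volume.restrict (Ioo a b)) := by
  rw [integral_indicator measurableSet_Ioo, Measure.restrict_restrict measurableSet_Ioo]
  have : Ioo a x ∩ Ioo a b = Ioo a x := inter_eq_self_of_subset_left (Ioo_subset_Ioo le_rfl hx)
  rw [this]; rfl

lemma tendsto_J (hab : a < b) (hm : StronglyMeasurable ψ) (hi : IntegrableOn ψ (Ioo a b))
    {β : ℝ} (hβ : 0 ≤ β) {x₀ : ℝ} (hx₀ : x₀ ∈ Icc a b) :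
    Tendsto (J a ψ β) (𝓝[Icc a b] x₀) (𝓝 (J a ψ β x₀)) := by
  set μ := volume.restrict (Ioo a b)
  set F : ℝ → ℝ → ℝ := fun x s => (Ioo a x).indicator (fun s => (x - s) ^ β * ψ s) s with hF
  have hmem : ∀ᶠ x in 𝓝[Icc a b] x₀, x ∈ Icc a b := self_mem_nhdsWithin
  have key : Tendsto (fun x => ∫ s, F x s ∂μ) (𝓝[Icc a b] x₀) (𝓝 (∫ s, F x₀ s ∂μ)) := by
    apply tendsto_integral_filter_of_dominated_convergence
      (fun s => (b - a) ^ β * ‖ψ s‖)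
    · exact Eventually.of_forall fun x =>
        ((kernel_meas hm hβ).indicator measurableSet_Ioo).aestronglyMeasurable
    · filter_upwards [hmem] with x hx
      refine (ae_restrict_iff' measurableSet_Ioo).2 (ae_of_all _ fun s hs => ?_)
      by_cases h : s ∈ Ioo a x
      · rw [hF]; simp only [indicator_of_mem h]
        have h1 : (0:ℝ) < x - s := by linarith [h.2]
        have h2 : x - s ≤ b - a := by have := hs.1; have := hx.2; linarith
        rw [norm_mul, Real.norm_eq_abs, abs_of_nonneg (Real.rpow_nonneg h1.le β)]
        exact mul_le_mul_of_nonneg_right (Real.rpow_le_rpow h1.le h2 hβ) (norm_nonneg _)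
      · rw [hF]; simp only [indicator_of_notMem h, norm_zero]
        have hba : (0:ℝ) ≤ b - a := by linarith [hab]
        exact mul_nonneg (Real.rpow_nonneg hba β) (norm_nonneg _)
    · exact (hi.norm.const_mul _)
    · have hne : ∀ᵐ s ∂μ, s ≠ x₀ := by
        refine ae_restrict_of_ae ?_
        have : (volume : Measure ℝ) {x₀} = 0 := measure_singleton x₀
        filter_upwards [measure_eq_zero_iff_ae_notMem.mp this] with s hs using hs
      filter_upwards [hne, ae_restrict_mem measurableSet_Ioo] with s hs hsmem
      rcases lt_or_gt_of_ne hs with hlt | hgt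
      · -- s < x₀ : eventually s ∈ Ioo a x, and continuity in x
        have hev : ∀ᶠ x in 𝓝[Icc a b] x₀, F x s = (x - s) ^ β * ψ s := by
          have : ∀ᶠ x in 𝓝 x₀, x ∈ Ioi s := Ioi_mem_nhds hlt
          filter_upwards [this.filter_mono nhdsWithin_le_nhds] with x hx
          exact indicator_of_mem (mem_Ioo.2 ⟨hsmem.1, hx⟩) _
        have hcont : Tendsto (fun x => (x - s) ^ β * ψ s) (𝓝[Icc a b] x₀)
            (𝓝 ((x₀ - s) ^ β * ψ s)) := by
          apply Tendsto.mono_left ?_ nhdsWithin_le_nhds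
          exact (((continuous_id.sub continuous_const).continuousAt).rpow_const
            (Or.inl (sub_ne_zero.2 hlt.ne')) |>.mul tendsto_const_nhds)
        have hx₀s : F x₀ s = (x₀ - s) ^ β * ψ s := indicator_of_mem (mem_Ioo.2 ⟨hsmem.1, hlt⟩) _
        rw [hx₀s]
        exact hcont.congr' (hev.mono fun x hx => hx.symm)
      · -- s > x₀ : eventually F x s = 0
        have hev : ∀ᶠ x in 𝓝[Icc a b] x₀, F x s = 0 := by
          have : ∀ᶠ x in 𝓝 x₀, x ∈ Iio s := Iio_mem_nhds hgt
          filter_upwards [this.filter_mono nhdsWithin_le_nhds] with x hx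
          exact indicator_of_notMem (fun hmem' => absurd hmem'.2 (not_lt.2 hx.le)) _
        have hx₀s : F x₀ s = 0 :=
          indicator_of_notMem (fun hmem' => absurd hmem'.2 (not_lt.2 hgt.le)) _
        rw [hx₀s]
        exact tendsto_const_nhds.congr' (hev.mono fun x hx => hx.symm)
  have hcongr : ∀ᶠ x in 𝓝[Icc a b] x₀, J a ψ β x = ∫ s, F x s ∂μ := by
    filter_upwards [hmem] with x hx using J_eq hm hβ hx.2
  rw [J_eq hm hβ hx₀.2]
  exact key.congr' (hcongr.mono fun x hx => hx.symm)

lemma J_fubini (hab : a < b) (hm : StronglyMeasurable ψ) (hi : IntegrableOn ψ (Ioo a b))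
    {β : ℝ} (hβ : 1 ≤ β) {x : ℝ} (hx : x ∈ Icc a b) :
    J a ψ β x = β * ∫ t in Ioo a x, J a ψ (β - 1) t := by
  have hβ0 : (0:ℝ) < β := by linarith
  have hβ1 : (0:ℝ) ≤ β - 1 := by linarith
  set ν := volume.restrict (Ioo a x) with hν
  haveI : IsFiniteMeasure ν := by
    constructor
    rw [hν, Measure.restrict_apply_univ]
    exact measure_Ioo_lt_top
  have hψx : IntegrableOn ψ (Ioo a x) := hi.mono_set (Ioo_subset_Ioo le_rfl hx.2)
  set g : ℝ → ℝ → ℝ := fun t s => (Iio t).indicator (fun s => (t - s) ^ (β - 1) * ψ s) s with hg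
  -- integrability on the product
  have hgint : Integrable (Function.uncurry g) (ν.prod ν) := by
    have heq : Function.uncurry g = fun p : ℝ × ℝ =>
        ({q : ℝ × ℝ | q.2 < q.1}).indicator (fun q => (q.1 - q.2) ^ (β - 1) * ψ q.2) p := by
      funext p
      rcases p with ⟨t, s⟩
      by_cases h : s < t
      · simp [hg, Function.uncurry, indicator_of_mem, h, Set.indicator_apply]
      · simp [hg, Function.uncurry, h, Set.indicator_apply]
    have hmeas : StronglyMeasurable (Function.uncurry g) := by
      rw [heq]
      refine StronglyMeasurable.indicator ?_ ?_
      · exact (((Real.continuous_rpow_const hβ1).comp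
          (continuous_fst.sub continuous_snd)).stronglyMeasurable).mul
          (hm.comp_measurable measurable_snd)
      · exact measurableSet_lt measurable_snd measurable_fst
    have hbound : Integrable (fun p : ℝ × ℝ => (b - a) ^ (β - 1) * ‖ψ p.2‖) (ν.prod ν) := by
      exact Integrable.mul_prod (integrable_const (μ := ν) _) hψx.norm
    refine hbound.mono' hmeas.aestronglyMeasurable ?_
    rw [hν, Measure.prod_restrict]
    refine (ae_restrict_iff' (measurableSet_Ioo.prod measurableSet_Ioo)).2
      (ae_of_all _ fun p hp => ?_)
    rcases p with ⟨t, s⟩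
    rcases hp with ⟨ht, hs⟩
    by_cases h : s < t
    · have h1 : (0:ℝ) < t - s := by linarith
      have h2 : t - s ≤ b - a := by
        have h3 := hs.1; have h4 := ht.2; have h5 := hx.2; linarith
      simp only [hg, Function.uncurry, indicator_of_mem (mem_Iio.2 h)]
      rw [norm_mul, Real.norm_eq_abs, abs_of_nonneg (Real.rpow_nonneg h1.le _)]
      exact mul_le_mul_of_nonneg_right (Real.rpow_le_rpow h1.le h2 hβ1) (norm_nonneg _)
    · simp only [hg, Function.uncurry, indicator_of_notMem (fun hh => h (mem_Iio.1 hh)), norm_zero]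
      have hba : (0:ℝ) ≤ b - a := by linarith
      exact mul_nonneg (Real.rpow_nonneg hba _) (norm_nonneg _)
  have hswap := integral_integral_swap hgint
  -- LHS of swap: iterated integral equals ∫ t in Ioo a x, J a ψ (β-1) t
  have hL : (∫ t, ∫ s, g t s ∂ν ∂ν) = ∫ t in Ioo a x, J a ψ (β - 1) t := by
    rw [hν]
    refine setIntegral_congr_fun measurableSet_Ioo fun t ht => ?_
    have : (∫ s, g t s ∂(volume.restrict (Ioo a x))) =
        ∫ s in Iio t, (t - s) ^ (β - 1) * ψ s ∂(volume.restrict (Ioo a x)) := by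
      rw [hg]
      exact integral_indicator measurableSet_Iio
    rw [this, Measure.restrict_restrict measurableSet_Iio]
    have hset : Iio t ∩ Ioo a x = Ioo a t := by
      ext s
      simp only [mem_inter_iff, mem_Iio, mem_Ioo]
      constructor
      · rintro ⟨h1, h2, h3⟩; exact ⟨h2, h1⟩
      · rintro ⟨h1, h2⟩; exact ⟨h2, h1, h2.trans ht.2⟩
    rw [hset]
    rfl
  -- RHS of swap
  have hR : (∫ s, ∫ t, g t s ∂ν ∂ν) = ∫ s in Ioo a x, ((x - s) ^ β * ψ s) * β⁻¹ := by
    rw [hν]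
    refine setIntegral_congr_fun measurableSet_Ioo fun s hs => ?_
    have hgs : (fun t => g t s) = (Ioi s).indicator (fun t => (t - s) ^ (β - 1) * ψ s) := by
      funext t
      by_cases h : s < t
      · simp [hg, Set.indicator_apply, h]
      · simp [hg, Set.indicator_apply, h]
    rw [hgs, integral_indicator measurableSet_Ioi,
      Measure.restrict_restrict measurableSet_Ioi]
    have hset : Ioi s ∩ Ioo a x = Ioo s x := by
      ext t
      simp only [mem_inter_iff, mem_Ioi, mem_Ioo]
      constructor
      · rintro ⟨h1, _, h3⟩; exact ⟨h1, h3⟩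
      · rintro ⟨h1, h2⟩; exact ⟨h1, hs.1.trans h1, h2⟩
    rw [hset, integral_mul_const]
    have hkey : (∫ t in Ioo s x, (t - s) ^ (β - 1)) = (x - s) ^ β / β := by
      rw [← integral_Ioc_eq_integral_Ioo, ← intervalIntegral.integral_of_le hs.2.le]
      have := intervalIntegral.integral_comp_sub_right (a := s) (b := x)
        (fun u => u ^ (β - 1)) s
      rw [this, sub_self]
      rw [integral_rpow (Or.inl (by linarith : (-1:ℝ) < β - 1))]
      have hb1 : β - 1 + 1 = β := by ring
      rw [hb1, Real.zero_rpow hβ0.ne', sub_zero]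
    rw [hkey]
    ring
  rw [hswap, hR] at hL
  rw [← hL, integral_mul_const]
  have : J a ψ β x = ∫ s in Ioo a x, (x - s) ^ β * ψ s := rfl
  rw [this]
  field_simp

lemma continuousOn_J (hab : a < b) (hm : StronglyMeasurable ψ) (hi : IntegrableOn ψ (Ioo a b))
    {β : ℝ} (hβ : 0 ≤ β) : ContinuousOn (J a ψ β) (Icc a b) :=
  fun y hy => tendsto_J hab hm hi hβ hy

lemma J_hasDerivWithinAt (hab : a < b) (hm : StronglyMeasurable ψ)
    (hi : IntegrableOn ψ (Ioo a b)) {β : ℝ} (hβ : 1 ≤ β) {x : ℝ} (hx : x ∈ Icc a b) :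
    HasDerivWithinAt (J a ψ β) (β * J a ψ (β - 1) x) (Icc a b) x := by
  have hβ1 : (0:ℝ) ≤ β - 1 := by linarith
  have hcont : ContinuousOn (J a ψ (β - 1)) (Icc a b) := continuousOn_J hab hm hi hβ1
  haveI : Fact (x ∈ Icc a b) := ⟨hx⟩
  have hII : IntervalIntegrable (J a ψ (β - 1)) volume a x := by
    apply ContinuousOn.intervalIntegrable
    apply hcont.mono
    rw [uIcc_of_le hx.1]
    exact Icc_subset_Icc le_rfl hx.2
  have hmeas : StronglyMeasurableAtFilter (J a ψ (β - 1)) (𝓝[Icc a b] x) volume :=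
    hcont.stronglyMeasurableAtFilter_nhdsWithin measurableSet_Icc x
  have hd : HasDerivWithinAt (fun u => ∫ t in a..u, J a ψ (β - 1) t)
      (J a ψ (β - 1) x) (Icc a b) x :=
    intervalIntegral.integral_hasDerivWithinAt_right hII hmeas (hcont x hx)
  have hIoo : ∀ y ∈ Icc a b, J a ψ β y = β * ∫ t in a..y, J a ψ (β - 1) t := by
    intro y hy
    rw [J_fubini hab hm hi hβ hy, intervalIntegral.integral_of_le hy.1,
      integral_Ioc_eq_integral_Ioo]
  exact (hd.const_mul β).congr hIoo (hIoo x hx)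

lemma contDiffOn_J (hab : a < b) (hm : StronglyMeasurable ψ) (hi : IntegrableOn ψ (Ioo a b)) :
    ∀ (m : ℕ) (β : ℝ), (m : ℝ) ≤ β → ContDiffOn ℝ m (J a ψ β) (Icc a b) := by
  intro m
  induction m with
  | zero =>
    intro β hβ
    simpa [contDiffOn_zero] using continuousOn_J hab hm hi (by exact_mod_cast hβ)
  | succ k ih =>
    intro β hβ
    have hβ1 : 1 ≤ β := by
      have : (1:ℝ) ≤ (k+1 : ℕ) := by exact_mod_cast Nat.one_le_iff_ne_zero.2 (Nat.succ_ne_zero k)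
      calc (1:ℝ) ≤ ((k+1 : ℕ) : ℝ) := this
        _ ≤ β := hβ
    have hderiv : ∀ x ∈ Icc a b,
        HasDerivWithinAt (J a ψ β) (β * J a ψ (β - 1) x) (Icc a b) x :=
      fun x hx => J_hasDerivWithinAt hab hm hi hβ1 hx
    rw [show ((k+1 : ℕ) : WithTop ℕ∞) = (k : WithTop ℕ∞) + 1 by push_cast; ring]
    rw [contDiffOn_succ_iff_derivWithin (uniqueDiffOn_Icc hab)]
    refine ⟨fun x hx => (hderiv x hx).differentiableWithinAt, ?_, ?_⟩
    · intro h; exact absurd h (by simp)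
    · have heq : EqOn (derivWithin (J a ψ β) (Icc a b)) (fun x => β * J a ψ (β - 1) x)
          (Icc a b) := fun x hx => (hderiv x hx).derivWithin (uniqueDiffOn_Icc hab x hx)
      refine ContDiffOn.congr ?_ heq
      exact (ih (β - 1) (by push_cast at hβ ⊢; linarith)).const_smul β |>.congr
        (fun x _ => by simp [smul_eq_mul])

lemma J_at_left (β : ℝ) : J a ψ β a = 0 := by
  simp [J]

lemma iteratedDerivWithin_congr_set' {f : ℝ → ℝ} {s t : Set ℝ} {x : ℝ} (h : s =ᶠ[𝓝 x] t)
    (n : ℕ) : iteratedDerivWithin n f s x = iteratedDerivWithin n f t x := by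
  rw [iteratedDerivWithin_eq_iteratedFDerivWithin, iteratedDerivWithin_eq_iteratedFDerivWithin,
    iteratedFDerivWithin_congr_set h n]

end Stmt5Aux

open Stmt5Aux

/-- The left Riemann–Liouville fractional integral of order `α` based at `a`. -/
noncomputable def RL (a α : ℝ) (f : ℝ → ℝ) (x : ℝ) : ℝ :=
  (1 / Real.Gamma α) * ∫ s in a..x, (x - s) ^ (α - 1) * f s

/-- Classical-derivative part of the paper's Corollary 2.2.3: if `u = I_{a+}^α φ` with
`φ ∈ L_p(a,b)`, `n ≥ 2`, `n−1 ≤ α < n`, then `v(x) = e^{σx} u(x)` is `(n−2)`-times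
continuously differentiable on `(a,b]`, and each derivative `D^j v`, `0 ≤ j ≤ n−2`,
tends to `0` as `x → a⁺` (hence extends continuously by `0` to `[a,b]`). -/
theorem stmt_5 (a b α σ p : ℝ) (n : ℕ) (hn : 2 ≤ n) (hab : a < b)
    (hα₁ : (n : ℝ) - 1 ≤ α) (hα₂ : α < n) (hp : 1 ≤ p)
    (φ : ℝ → ℝ) (hφ : MemLp φ (ENNReal.ofReal p) (volume.restrict (Ioo a b)))
    (v : ℝ → ℝ) (hv : v = fun x => Real.exp (σ * x) * RL a α φ x) :
    ContDiffOn ℝ (↑(n - 2) : ℕ∞) v (Ioc a b) ∧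
    ∀ j ≤ n - 2,
      Tendsto (iteratedDerivWithin j v (Ioc a b)) (nhdsWithin a (Ioi a)) (nhds 0) := by
  -- measurable representative
  have hφm := hφ.aestronglyMeasurable
  set ψ : ℝ → ℝ := hφm.mk φ with hψdef
  have hψm : StronglyMeasurable ψ := hφm.stronglyMeasurable_mk
  have hae : φ =ᵐ[volume.restrict (Ioo a b)] ψ := hφm.ae_eq_mk
  -- integrability
  haveI : IsFiniteMeasure (volume.restrict (Ioo a b)) := by
    constructor
    rw [Measure.restrict_apply_univ]
    exact measure_Ioo_lt_top
  have hφ1 : MemLp φ 1 (volume.restrict (Ioo a b)) :=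
    hφ.mono_exponent (ENNReal.one_le_ofReal.2 hp)
  have hφint : IntegrableOn φ (Ioo a b) := memLp_one_iff_integrable.mp hφ1
  have hψi : IntegrableOn ψ (Ioo a b) := hφint.congr hae
  -- numerical facts
  set N : ℕ := n - 2 with hN
  have hNcast : (N : ℝ) = (n : ℝ) - 2 := by
    rw [hN]; push_cast [Nat.cast_sub hn]; ring
  have hNα : (N : ℝ) ≤ α - 1 := by rw [hNcast]; linarith
  set c : ℝ := 1 / Real.Gamma α with hc
  set V : ℝ → ℝ := fun x => Real.exp (σ * x) * (c * J a ψ (α - 1) x) with hV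
  -- v = V on Ioc a b
  have hvV : EqOn v V (Ioc a b) := by
    intro x hx
    rw [hv, hV]
    simp only
    congr 1
    rw [RL, hc]
    congr 1
    rw [intervalIntegral.integral_of_le hx.1.le, integral_Ioc_eq_integral_Ioo]
    refine integral_congr_ae ?_
    have hsub : φ =ᵐ[volume.restrict (Ioo a x)] ψ :=
      ae_restrict_of_ae_restrict_of_subset (Ioo_subset_Ioo le_rfl hx.2) hae
    filter_upwards [hsub] with s hs
    rw [hs]
  -- smoothness of V on Icc a b
  have hexp : ContDiff ℝ (⊤ : ℕ∞) (fun x : ℝ => Real.exp (σ * x)) :=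
    Real.contDiff_exp.comp (contDiff_const.mul contDiff_id)
  have hVcd : ContDiffOn ℝ N V (Icc a b) := by
    refine (hexp.contDiffOn.of_le (mod_cast le_top)).mul ?_
    have := (contDiffOn_J hab hψm hψi N (α - 1) hNα).const_smul c
    exact this.congr (fun x _ => by simp [smul_eq_mul])
  have goal1 : ContDiffOn ℝ (↑(n - 2) : ℕ∞) v (Ioc a b) := by
    have := (hVcd.mono Ioc_subset_Icc_self).congr hvV
    exact_mod_cast this
  refine ⟨goal1, ?_⟩
  -- representation of iterated derivatives of V on Icc a b
  have key : ∀ j, j ≤ N → ∃ d : ℕ → ℝ, (∀ i, j < i → d i = 0) ∧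
      EqOn (iteratedDerivWithin j V (Icc a b))
        (fun x => Real.exp (σ * x) *
          ∑ i ∈ Finset.range (j + 1), d i * J a ψ (α - 1 - i) x) (Icc a b) := by
    intro j
    induction j with
    | zero =>
      intro _
      refine ⟨fun i => if i = 0 then c else 0, fun i hi => if_neg (by omega), ?_⟩
      intro x hx
      simp [iteratedDerivWithin_zero, hV, Finset.sum_range_one]
    | succ j ih =>
      intro hj
      obtain ⟨d, hd0, hdEq⟩ := ih (le_trans (Nat.le_succ j) hj)
      -- exponent bounds
      have hji : ∀ i : ℕ, i ≤ j → (1:ℝ) ≤ α - 1 - i := by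
        intro i hi
        have h1 : (i:ℝ) ≤ (j:ℝ) := by exact_mod_cast hi
        have h2 : (j:ℝ) + 1 ≤ (N:ℝ) := by exact_mod_cast hj
        rw [hNcast] at h2
        linarith
      refine ⟨fun i => σ * d i + (Nat.casesOn i 0 fun k => (α - 1 - k) * d k), ?_, ?_⟩
      · intro i hi
        cases i with
        | zero => omega
        | succ k =>
          have h1 : d (k+1) = 0 := hd0 _ (by omega)
          have h2 : d k = 0 := hd0 _ (by omega)
          simp [h1, h2]
      · intro x hx
        have hud : UniqueDiffWithinAt ℝ (Icc a b) x := (uniqueDiffOn_Icc hab) x hx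
        rw [iteratedDerivWithin_succ]
        rw [derivWithin_congr hdEq (hdEq hx)]
        -- compute derivative of the explicit formula
        have hS : HasDerivWithinAt
            (fun x => ∑ i ∈ Finset.range (j + 1), d i * J a ψ (α - 1 - i) x)
            (∑ i ∈ Finset.range (j + 1), d i * ((α - 1 - i) * J a ψ (α - 1 - i - 1) x))
            (Icc a b) x := by
          refine HasDerivWithinAt.fun_sum fun i hi => ?_
          exact (J_hasDerivWithinAt hab hψm hψi
            (hji i (Nat.lt_succ_iff.1 (Finset.mem_range.1 hi))) hx).const_mul (d i)
        have hE : HasDerivWithinAt (fun x : ℝ => Real.exp (σ * x))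
            (Real.exp (σ * x) * σ) (Icc a b) x := by
          exact ((Real.hasDerivAt_exp (σ * x)).comp x
            ((hasDerivAt_id x).const_mul σ |>.congr_deriv (by ring))).hasDerivWithinAt
        have hprod := hE.fun_mul hS
        rw [hprod.derivWithin hud]
        -- algebraic identity
        beta_reduce
        have harg : ∀ i : ℕ, α - 1 - (((i+1) : ℕ) : ℝ) = α - 1 - (i:ℝ) - 1 := by
          intro i; push_cast; ring
        have hT : (∑ i ∈ Finset.range (j + 1 + 1),
            (σ * d i + Nat.casesOn i 0 fun k => (α - 1 - k) * d k) * J a ψ (α - 1 - i) x)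
            = σ * (∑ i ∈ Finset.range (j + 1), d i * J a ψ (α - 1 - i) x)
            + ∑ i ∈ Finset.range (j + 1), d i * ((α - 1 - i) * J a ψ (α - 1 - i - 1) x) := by
          have h1 : ∀ i ∈ Finset.range (j+1+1),
              (σ * d i + Nat.casesOn i 0 fun k => (α - 1 - k) * d k) * J a ψ (α - 1 - i) x
              = σ * d i * J a ψ (α - 1 - i) x
                + (Nat.casesOn i 0 fun k => (α - 1 - k) * d k) * J a ψ (α - 1 - i) x :=
            fun i _ => by ring
          rw [Finset.sum_congr rfl h1, Finset.sum_add_distrib]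
          congr 1
          · rw [Finset.sum_range_succ, hd0 (j+1) (Nat.lt_succ_self j), Finset.mul_sum]
            simp only [mul_zero, zero_mul, add_zero]
            exact Finset.sum_congr rfl fun i _ => by ring
          · rw [Finset.sum_range_succ']
            have h0 : ((Nat.casesOn (0:ℕ) 0 fun k => (α - 1 - (k:ℝ)) * d k : ℝ))
                * J a ψ (α - 1 - ((0:ℕ):ℝ)) x = 0 := by simp
            rw [h0, add_zero]
            refine Finset.sum_congr rfl fun i _ => ?_
            show (α - 1 - (i:ℝ)) * d i * J a ψ (α - 1 - (((i+1):ℕ):ℝ)) x = _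
            rw [harg i]
            ring
        rw [hT]
        ring
  -- final: tendsto of iterated derivatives
  intro j hj
  obtain ⟨d, hd0, hdEq⟩ := key j hj
  have hTf : Tendsto (fun x => Real.exp (σ * x) *
      ∑ i ∈ Finset.range (j + 1), d i * J a ψ (α - 1 - i) x) (𝓝[Icc a b] a) (𝓝 0) := by
    have hzero : (0:ℝ) = ∑ i ∈ Finset.range (j + 1), d i * J a ψ (α - 1 - i) a := by
      simp [J_at_left]
    have hsum : Tendsto (fun x => ∑ i ∈ Finset.range (j + 1), d i * J a ψ (α - 1 - i) x)
        (𝓝[Icc a b] a) (𝓝 0) := by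
      rw [hzero]
      refine tendsto_finset_sum _ fun i hi => ?_
      have hβ0 : (0:ℝ) ≤ α - 1 - i := by
        have h1 : (i:ℝ) ≤ j := by exact_mod_cast Nat.lt_succ_iff.1 (Finset.mem_range.1 hi)
        have h2 : (j:ℝ) ≤ N := by exact_mod_cast hj
        rw [hNcast] at h2; linarith
      exact (tendsto_J hab hψm hψi hβ0 (left_mem_Icc.2 hab.le)).const_mul (d i)
    have hexp' : Tendsto (fun x => Real.exp (σ * x)) (𝓝[Icc a b] a)
        (𝓝 (Real.exp (σ * a))) :=
      ((Real.continuous_exp.comp (continuous_const.mul continuous_id)).tendsto a).mono_left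
        nhdsWithin_le_nhds
    simpa using hexp'.mul hsum
  have hIccT : Tendsto (iteratedDerivWithin j V (Icc a b)) (𝓝[>] a) (𝓝 0) := by
    have h1 : Tendsto (iteratedDerivWithin j V (Icc a b)) (𝓝[Icc a b] a) (𝓝 0) := by
      refine hTf.congr' ?_
      filter_upwards [self_mem_nhdsWithin] with x hx
      exact (hdEq hx).symm
    have hmono : 𝓝[Ioo a b] a ≤ 𝓝[Icc a b] a := nhdsWithin_mono a Ioo_subset_Icc_self
    rw [← nhdsWithin_Ioo_eq_nhdsGT hab]
    exact h1.mono_left hmono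
  have hmemIoo : ∀ᶠ x in 𝓝[>] a, x ∈ Ioo a b := Ioo_mem_nhdsGT hab
  refine hIccT.congr' ?_
  filter_upwards [hmemIoo] with x hx
  have e1 : iteratedDerivWithin j V (Icc a b) x = iteratedDerivWithin j V (Ioc a b) x := by
    refine iteratedDerivWithin_congr_set' ?_ j
    rw [eventuallyEq_set]
    filter_upwards [compl_singleton_mem_nhds hx.1.ne'] with y hy
    simp only [mem_Ioc, mem_Icc]
    have hyne : y ≠ a := hy
    constructor
    · rintro ⟨h1, h2⟩; exact ⟨lt_of_le_of_ne h1 (Ne.symm hyne), h2⟩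
    · rintro ⟨h1, h2⟩; exact ⟨h1.le, h2⟩
  rw [e1]
  exact (iteratedDerivWithin_congr hvV
    (Ioo_subset_Ioc_self hx)).symm
end

section
/- Let a < b, α > 0, λ ≥ 0, and u, v ∈ L₂(a,b). Then both integrals below are finite and ∫_a^b (I_{a+}^{α,λ} u)(x) · v(x) dx = ∫_a^b u(x) · (I_{b−}^{α,λ} v)(x) dx. (Paper's Lemma 2.2.8: the left and right tempered fractional integrals are adjoint to each other in L₂(a,b).) -/
/-!
Both tempered integrals are integral operators on `(a, b)` with the difference kernel
`k (x - s)`, `k t = 1_{t > 0} e^{-λt} t^{α-1} / Γ(α)`: the left one integrates in `s`, the right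
one in `x`. The identity is therefore Fubini's theorem for `k (x - s) u(s) v(x)` on the square,
which is integrable by the Schur test: `|u(s) v(x)| ≤ u(s)² + v(x)²`, and every row and column
of the kernel has `L¹` norm at most `∫_{a-b}^{b-a} |k| < ∞`, finite because `α > 0`, `λ ≥ 0`.
-/

open MeasureTheory Set

/-- The left tempered fractional integral
`(I_{a+}^{α,λ} f)(x) = (1/Γ(α)) ∫_a^x e^{−λ(x−s)} (x−s)^{α−1} f(s) ds`. -/
noncomputable def TIl (a α lam : ℝ) (f : ℝ → ℝ) (x : ℝ) : ℝ :=
  (1 / Real.Gamma α) * ∫ s in a..x, Real.exp (-(lam * (x - s))) * (x - s) ^ (α - 1) * f s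

/-- The right tempered fractional integral
`(I_{b−}^{α,λ} f)(x) = (1/Γ(α)) ∫_x^b e^{λ(x−s)} (s−x)^{α−1} f(s) ds`. -/
noncomputable def TIr (b α lam : ℝ) (f : ℝ → ℝ) (x : ℝ) : ℝ :=
  (1 / Real.Gamma α) * ∫ s in x..b, Real.exp (lam * (x - s)) * (s - x) ^ (α - 1) * f s

open scoped ENNReal

theorem ENNReal.mul_le_sq_add_sq (a b : ℝ≥0∞) : a * b ≤ a ^ 2 + b ^ 2 := by
  rcases le_total a b with h | h
  · calc a * b ≤ b ^ 2 := by rw [sq]; exact mul_le_mul_left h b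
      _ ≤ a ^ 2 + b ^ 2 := le_add_self
  · calc a * b ≤ a ^ 2 := by rw [sq]; exact mul_le_mul_right h a
      _ ≤ a ^ 2 + b ^ 2 := le_self_add

section SchurTest

variable {X Y : Type*} [MeasurableSpace X] [MeasurableSpace Y] {μ : Measure X} {ν : Measure Y}
  [SFinite μ] [SFinite ν] {K : X × Y → ℝ} {C : ℝ≥0∞}

theorem lintegral_enorm_mul_sq_snd_le (hK : AEStronglyMeasurable K (μ.prod ν))
    (hKy : ∀ᵐ y ∂ν, ∫⁻ x, ‖K (x, y)‖ₑ ∂μ ≤ C) {u : Y → ℝ} (hu : AEStronglyMeasurable u ν) :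
    ∫⁻ p, ‖K p‖ₑ * ‖u p.2‖ₑ ^ 2 ∂(μ.prod ν) ≤ C * ∫⁻ y, ‖u y‖ₑ ^ 2 ∂ν := by
  have hu2 : AEMeasurable (fun y => ‖u y‖ₑ ^ 2) ν := hu.enorm.pow_const 2
  rw [lintegral_prod_symm (fun p => ‖K p‖ₑ * ‖u p.2‖ₑ ^ 2)
    (hK.enorm.mul (hu2.comp_quasiMeasurePreserving Measure.quasiMeasurePreserving_snd))]
  calc ∫⁻ y, ∫⁻ x, ‖K (x, y)‖ₑ * ‖u y‖ₑ ^ 2 ∂μ ∂ν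
      = ∫⁻ y, (∫⁻ x, ‖K (x, y)‖ₑ ∂μ) * ‖u y‖ₑ ^ 2 ∂ν := by
        simp_rw [lintegral_mul_const' _ _ (ENNReal.pow_ne_top enorm_ne_top)]
    _ ≤ ∫⁻ y, C * ‖u y‖ₑ ^ 2 ∂ν := lintegral_mono_ae (hKy.mono fun y hy => mul_le_mul_left hy _)
    _ = C * ∫⁻ y, ‖u y‖ₑ ^ 2 ∂ν := lintegral_const_mul'' C hu2

theorem lintegral_enorm_mul_sq_fst_le (hK : AEStronglyMeasurable K (μ.prod ν))
    (hKx : ∀ᵐ x ∂μ, ∫⁻ y, ‖K (x, y)‖ₑ ∂ν ≤ C) {v : X → ℝ} (hv : AEStronglyMeasurable v μ) :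
    ∫⁻ p, ‖K p‖ₑ * ‖v p.1‖ₑ ^ 2 ∂(μ.prod ν) ≤ C * ∫⁻ x, ‖v x‖ₑ ^ 2 ∂μ := by
  rw [← lintegral_prod_swap]
  exact lintegral_enorm_mul_sq_snd_le
    (hK.comp_measurePreserving Measure.measurePreserving_swap) hKx hv

theorem integrable_kernel_mul_mul_of_memLp_two (hK : AEStronglyMeasurable K (μ.prod ν))
    (hC : C ≠ ∞) (hKx : ∀ᵐ x ∂μ, ∫⁻ y, ‖K (x, y)‖ₑ ∂ν ≤ C)
    (hKy : ∀ᵐ y ∂ν, ∫⁻ x, ‖K (x, y)‖ₑ ∂μ ≤ C) {u : Y → ℝ} {v : X → ℝ}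
    (hu : MemLp u 2 ν) (hv : MemLp v 2 μ) :
    Integrable (fun p => K p * u p.2 * v p.1) (μ.prod ν) := by
  have hu2 : ∫⁻ y, ‖u y‖ₑ ^ 2 ∂ν < ∞ := by
    simpa [HasFiniteIntegral, enorm_pow] using hu.integrable_sq.2
  have hv2 : ∫⁻ x, ‖v x‖ₑ ^ 2 ∂μ < ∞ := by
    simpa [HasFiniteIntegral, enorm_pow] using hv.integrable_sq.2
  refine ⟨(hK.mul (hu.1.comp_quasiMeasurePreserving Measure.quasiMeasurePreserving_snd)).mul
    (hv.1.comp_quasiMeasurePreserving Measure.quasiMeasurePreserving_fst), ?_⟩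
  calc ∫⁻ p, ‖K p * u p.2 * v p.1‖ₑ ∂(μ.prod ν)
      ≤ ∫⁻ p, ‖K p‖ₑ * ‖u p.2‖ₑ ^ 2 + ‖K p‖ₑ * ‖v p.1‖ₑ ^ 2 ∂(μ.prod ν) := by
        refine lintegral_mono fun p => ?_
        rw [enorm_mul, enorm_mul, mul_assoc, ← mul_add]
        exact mul_le_mul_right (ENNReal.mul_le_sq_add_sq _ _) _
    _ = ∫⁻ p, ‖K p‖ₑ * ‖u p.2‖ₑ ^ 2 ∂(μ.prod ν) + ∫⁻ p, ‖K p‖ₑ * ‖v p.1‖ₑ ^ 2 ∂(μ.prod ν) :=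
        lintegral_add_left' (hK.enorm.mul ((hu.1.enorm.pow_const 2).comp_quasiMeasurePreserving
          Measure.quasiMeasurePreserving_snd)) _
    _ ≤ C * ∫⁻ y, ‖u y‖ₑ ^ 2 ∂ν + C * ∫⁻ x, ‖v x‖ₑ ^ 2 ∂μ :=
        add_le_add (lintegral_enorm_mul_sq_snd_le hK hKy hu.1)
          (lintegral_enorm_mul_sq_fst_le hK hKx hv.1)
    _ < ∞ := ENNReal.add_lt_top.2
        ⟨ENNReal.mul_lt_top hC.lt_top hu2, ENNReal.mul_lt_top hC.lt_top hv2⟩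

theorem kernel_adjoint_of_integrable {u : Y → ℝ} {v : X → ℝ}
    (hF : Integrable (fun p => K p * u p.2 * v p.1) (μ.prod ν)) :
    Integrable (fun x => (∫ y, K (x, y) * u y ∂ν) * v x) μ ∧
    Integrable (fun y => u y * ∫ x, K (x, y) * v x ∂μ) ν ∧
    ∫ x, (∫ y, K (x, y) * u y ∂ν) * v x ∂μ = ∫ y, u y * ∫ x, K (x, y) * v x ∂μ ∂ν := by
  have hleft : (fun x => (∫ y, K (x, y) * u y ∂ν) * v x) =
      fun x => ∫ y, K (x, y) * u y * v x ∂ν := by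
    ext x; exact (integral_mul_const _ _).symm
  have hright : (fun y => u y * ∫ x, K (x, y) * v x ∂μ) =
      fun y => ∫ x, K (x, y) * u y * v x ∂μ := by
    ext y; rw [← integral_const_mul]; congr with x; ring
  rw [hleft, hright]
  exact ⟨hF.integral_prod_left, hF.integral_prod_right, integral_integral_swap hF⟩

end SchurTest

section DifferenceKernel

variable {a b : ℝ}

theorem setLIntegral_Ioo_comp_sub_right_le (f : ℝ → ℝ≥0∞) {s : ℝ} (hs : s ∈ Icc a b) :
    ∫⁻ x in Ioo a b, f (x - s) ≤ ∫⁻ t in Ioo (a - b) (b - a), f t := by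
  calc ∫⁻ x in Ioo a b, f (x - s) = ∫⁻ t in Ioo (a - s) (b - s), f t := by
        simpa using (measurePreserving_sub_right volume s).setLIntegral_comp_preimage_emb
          (MeasurableEquiv.subRight s).measurableEmbedding f (Ioo (a - s) (b - s))
    _ ≤ _ := lintegral_mono_set (Ioo_subset_Ioo (by linarith [hs.2]) (by linarith [hs.1]))

theorem setLIntegral_Ioo_comp_sub_left_le (f : ℝ → ℝ≥0∞) {x : ℝ} (hx : x ∈ Icc a b) :
    ∫⁻ s in Ioo a b, f (x - s) ≤ ∫⁻ t in Ioo (a - b) (b - a), f t := by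
  calc ∫⁻ s in Ioo a b, f (x - s) = ∫⁻ t in Ioo (x - b) (x - a), f t := by
        simpa using (Measure.measurePreserving_sub_left volume x).setLIntegral_comp_preimage_emb
          (MeasurableEquiv.subLeft x).measurableEmbedding f (Ioo (x - b) (x - a))
    _ ≤ _ := lintegral_mono_set (Ioo_subset_Ioo (by linarith [hx.1]) (by linarith [hx.2]))

theorem integrable_comp_sub_mul_mul_of_memLp_two {κ : ℝ → ℝ} (hκm : Measurable κ)
    (hκ : IntegrableOn κ (Ioo (a - b) (b - a))) {u v : ℝ → ℝ}
    (hu : MemLp u 2 (volume.restrict (Ioo a b))) (hv : MemLp v 2 (volume.restrict (Ioo a b))) :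
    Integrable (fun p : ℝ × ℝ => κ (p.1 - p.2) * u p.2 * v p.1)
      ((volume.restrict (Ioo a b)).prod (volume.restrict (Ioo a b))) :=
  integrable_kernel_mul_mul_of_memLp_two (hκm.comp measurable_sub).aestronglyMeasurable hκ.2.ne
    (ae_restrict_of_forall_mem measurableSet_Ioo fun _ hx =>
      setLIntegral_Ioo_comp_sub_left_le _ (Ioo_subset_Icc_self hx))
    (ae_restrict_of_forall_mem measurableSet_Ioo fun _ hs =>
      setLIntegral_Ioo_comp_sub_right_le _ (Ioo_subset_Icc_self hs))
    hu hv

end DifferenceKernel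

noncomputable def temperedKernel (α lam : ℝ) : ℝ → ℝ :=
  (Ioi 0).indicator fun t => Real.exp (-(lam * t)) * t ^ (α - 1) / Real.Gamma α

section TemperedKernel

variable {α lam : ℝ}

theorem measurable_temperedKernel : Measurable (temperedKernel α lam) :=
  Measurable.indicator (by fun_prop) measurableSet_Ioi

theorem integrableOn_temperedKernel_Iic (hα : 0 < α) (hlam : 0 ≤ lam) (L : ℝ) :
    IntegrableOn (temperedKernel α lam) (Iic L) := by
  rw [IntegrableOn, temperedKernel, integrable_indicator_iff measurableSet_Ioi, IntegrableOn,
    Measure.restrict_restrict measurableSet_Ioi, Ioi_inter_Iic]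
  have hdom : IntegrableOn (fun t : ℝ => t ^ (α - 1) / Real.Gamma α) (Ioc 0 L) :=
    (intervalIntegral.intervalIntegrable_rpow' (by linarith)).1.div_const _
  refine hdom.mono' (by fun_prop) (ae_restrict_of_forall_mem measurableSet_Ioc fun t ht => ?_)
  have hΓ : 0 < Real.Gamma α := Real.Gamma_pos_of_pos hα
  have hexp : Real.exp (-(lam * t)) ≤ 1 :=
    Real.exp_le_one_iff.2 (neg_nonpos.2 (mul_nonneg hlam ht.1.le))
  have hpow : 0 ≤ t ^ (α - 1) := Real.rpow_nonneg ht.1.le _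
  rw [Real.norm_of_nonneg (div_nonneg (mul_nonneg (Real.exp_nonneg _) hpow) hΓ.le)]
  exact div_le_div_of_nonneg_right (mul_le_of_le_one_left hpow hexp) hΓ.le

theorem TIl_eq_setIntegral_temperedKernel {a b x : ℝ} (hax : a ≤ x) (hxb : x ≤ b) (f : ℝ → ℝ) :
    TIl a α lam f x = ∫ s in Ioo a b, temperedKernel α lam (x - s) * f s := by
  have hind : (fun s => temperedKernel α lam (x - s) * f s) = (Iio x).indicator
      fun s => Real.exp (-(lam * (x - s))) * (x - s) ^ (α - 1) / Real.Gamma α * f s := by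
    ext s; by_cases hs : s < x <;> simp [temperedKernel, indicator, hs]
  rw [hind, setIntegral_indicator measurableSet_Iio, Ioo_inter_Iio, min_eq_right hxb, TIl,
    intervalIntegral.integral_of_le hax, integral_Ioc_eq_integral_Ioo, ← integral_const_mul]
  congr with s; ring

theorem TIr_eq_setIntegral_temperedKernel {a b s : ℝ} (has : a ≤ s) (hsb : s ≤ b) (f : ℝ → ℝ) :
    TIr b α lam f s = ∫ x in Ioo a b, temperedKernel α lam (x - s) * f x := by
  have hind : (fun x => temperedKernel α lam (x - s) * f x) = (Ioi s).indicator
      fun x => Real.exp (-(lam * (x - s))) * (x - s) ^ (α - 1) / Real.Gamma α * f x := by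
    ext x; by_cases hx : s < x <;> simp [temperedKernel, indicator, hx]
  rw [hind, setIntegral_indicator measurableSet_Ioi, Ioo_inter_Ioi, max_eq_right has, TIr,
    intervalIntegral.integral_of_le hsb, integral_Ioc_eq_integral_Ioo, ← integral_const_mul]
  congr with x
  rw [show lam * (s - x) = -(lam * (x - s)) by ring]
  ring

end TemperedKernel

theorem stmt_7_general (a b α lam : ℝ) (hα : 0 < α) (hlam : 0 ≤ lam)
    (u v : ℝ → ℝ)
    (hu : MemLp u 2 (volume.restrict (Ioo a b)))
    (hv : MemLp v 2 (volume.restrict (Ioo a b))) :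
    IntegrableOn (fun x => TIl a α lam u x * v x) (Ioo a b) ∧
    IntegrableOn (fun x => u x * TIr b α lam v x) (Ioo a b) ∧
    ∫ x in Ioo a b, TIl a α lam u x * v x = ∫ x in Ioo a b, u x * TIr b α lam v x := by
  have hκ : IntegrableOn (temperedKernel α lam) (Ioo (a - b) (b - a)) :=
    (integrableOn_temperedKernel_Iic hα hlam (b - a)).mono_set
      (Ioo_subset_Iio_self.trans Iio_subset_Iic_self)
  obtain ⟨hleft, hright, hswap⟩ := kernel_adjoint_of_integrable
    (K := fun p => temperedKernel α lam (p.1 - p.2))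
    (integrable_comp_sub_mul_mul_of_memLp_two measurable_temperedKernel hκ hu hv)
  have hTIl : (fun x => (∫ s in Ioo a b, temperedKernel α lam (x - s) * u s) * v x)
      =ᵐ[volume.restrict (Ioo a b)] fun x => TIl a α lam u x * v x :=
    ae_restrict_of_forall_mem measurableSet_Ioo fun x hx => by
      simp only [TIl_eq_setIntegral_temperedKernel hx.1.le hx.2.le]
  have hTIr : (fun s => u s * ∫ x in Ioo a b, temperedKernel α lam (x - s) * v x)
      =ᵐ[volume.restrict (Ioo a b)] fun s => u s * TIr b α lam v s :=
    ae_restrict_of_forall_mem measurableSet_Ioo fun s hs => by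
      simp only [TIr_eq_setIntegral_temperedKernel hs.1.le hs.2.le]
  exact ⟨hleft.congr hTIl, hright.congr hTIr,
    by rw [← integral_congr_ae hTIl, ← integral_congr_ae hTIr, hswap]⟩

/-- Paper's Lemma 2.2.8: the left and right tempered fractional integrals are adjoint in
`L₂(a,b)`: for `u, v ∈ L₂(a,b)`, both integrals are finite and
`∫_a^b (I_{a+}^{α,λ}u) v = ∫_a^b u (I_{b−}^{α,λ}v)`. -/
theorem stmt_7 (a b α lam : ℝ) (hab : a < b) (hα : 0 < α) (hlam : 0 ≤ lam)
    (u v : ℝ → ℝ)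
    (hu : MemLp u 2 (volume.restrict (Ioo a b)))
    (hv : MemLp v 2 (volume.restrict (Ioo a b))) :
    IntegrableOn (fun x => TIl a α lam u x * v x) (Ioo a b) ∧
    IntegrableOn (fun x => u x * TIr b α lam v x) (Ioo a b) ∧
    ∫ x in Ioo a b, TIl a α lam u x * v x = ∫ x in Ioo a b, u x * TIr b α lam v x :=
  stmt_7_general a b α lam hα hlam u v hu hv
end
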